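/- For every j ∈ {0,1,…,k-2} one has 2/(3π) ≤ (t_{j+1} - t_j)/(t_{j+2} - t_{j+1}) ≤ 24·π·√2·√(3π/4 + 1). -/

import Mathlib

/-!
Substitute `s = -cos u`: then `ds / √(1 - s²) = du`, the node `t_i` becomes the angle
`u_i = arcsin t_i + π / 2 ∈ [0, π]`, and every cell `[t_i, t_{i+1}]` carries weighted mass `π / k`.
Comparing the masses of two adjacent cells through the monotonicity of `g` shows that the right
cell is at most as long in angle as the left one, and the product formula for `cos x - cos y`
turns this into the lower bound. For the upper bound we may assume that the left cell is the longer
one in `s`; concavity then gives `g ≤ 2 g(t_{j+1})` on the right cell and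
`(1 + s) g(t_{j+1}) ≤ (1 + t_{j+1}) g(s)` on the left one. Together with
`1 - cos u ≥ (u / v)² (1 - cos v)` for `0 ≤ u ≤ v ≤ π` (concavity of `sin`), this forces the left
angle to be at most six times the right one, and then the ratio is at most `12 π²`.
-/

open Real MeasureTheory Set

lemma cos_sub_cos_eq_two_mul_sin_mul_sin (x y : ℝ) :
    cos x - cos y = 2 * sin ((x + y) / 2) * sin ((y - x) / 2) := by
  rw [Real.cos_sub_cos, ← neg_sub y x, neg_div, sin_neg]
  ring

lemma one_sub_cos_eq_two_mul_sin_sq (x : ℝ) : 1 - cos x = 2 * sin (x / 2) ^ 2 := by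
  have h := cos_sq (x / 2)
  rw [show 2 * (x / 2) = x by ring] at h
  rw [sin_sq]
  linarith

lemma mul_sin_le_sin_mul {c x : ℝ} (hc₀ : 0 ≤ c) (hc₁ : c ≤ 1) (hx₀ : 0 ≤ x) (hx : x ≤ π) :
    c * sin x ≤ sin (c * x) := by
  simpa using strictConcaveOn_sin_Icc.concaveOn.2 ⟨le_rfl, pi_pos.le⟩ ⟨hx₀, hx⟩
    (sub_nonneg.2 hc₁) hc₀ (by ring)

lemma one_sub_cos_mul_sq_le {u v : ℝ} (hu : 0 ≤ u) (huv : u ≤ v) (hv : v ≤ π) :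
    (1 - cos v) * u ^ 2 ≤ (1 - cos u) * v ^ 2 := by
  rcases (hu.trans huv).eq_or_lt with rfl | hv₀
  · rw [le_antisymm huv hu]
  have hsin : u * sin (v / 2) ≤ v * sin (u / 2) := by
    have h := mul_sin_le_sin_mul (div_nonneg hu hv₀.le) ((div_le_one hv₀).2 huv)
      (half_pos hv₀).le (by linarith : v / 2 ≤ π)
    rw [show u / v * (v / 2) = u / 2 by field_simp, div_mul_eq_mul_div, div_le_iff₀ hv₀] at h
    linarith
  have hsin₀ : 0 ≤ u * sin (v / 2) :=
    mul_nonneg hu (sin_nonneg_of_nonneg_of_le_pi (by linarith) (by linarith))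
  rw [one_sub_cos_eq_two_mul_sin_sq, one_sub_cos_eq_two_mul_sin_sq]
  nlinarith [mul_le_mul hsin hsin hsin₀ (hsin₀.trans hsin)]

lemma one_sub_cos_mul_sub_le {u₀ u₁ : ℝ} (h₀ : 0 ≤ u₀) (h₀₁ : u₀ ≤ u₁) (h₁ : u₁ ≤ π) :
    (1 - cos u₁) * (u₁ - u₀) ≤ 3 * ((u₁ - sin u₁) - (u₀ - sin u₀)) := by
  rcases (h₀.trans h₀₁).eq_or_lt with rfl | hu₁
  · rw [le_antisymm h₀₁ h₀]; simp
  set c := 1 - cos u₁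
  have hc : 0 ≤ c := sub_nonneg.2 (cos_le_one u₁)
  have hmono : MonotoneOn (fun u => 3 * u₁ ^ 2 * (u - sin u) - c * u ^ 3) (Icc 0 u₁) := by
    refine monotoneOn_of_hasDerivWithinAt_nonneg (convex_Icc 0 u₁) (by fun_prop)
      (f' := fun u => 3 * u₁ ^ 2 * (1 - cos u) - c * (3 * u ^ 2)) (fun u _ => ?_) (fun u hu => ?_)
    · exact ((((hasDerivAt_id u).sub (hasDerivAt_sin u)).const_mul _).sub
        ((hasDerivAt_pow 3 u).const_mul c)).hasDerivWithinAt.congr_deriv (by simp)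
    · rw [interior_Icc] at hu
      nlinarith [one_sub_cos_mul_sq_le hu.1.le hu.2.le h₁]
  have h := hmono ⟨h₀, h₀₁⟩ ⟨h₀.trans h₀₁, le_rfl⟩ h₀₁
  have hcube : (u₁ - u₀) * u₁ ^ 2 ≤ u₁ ^ 3 - u₀ ^ 3 := by
    nlinarith [mul_nonneg (mul_nonneg h₀ (sub_nonneg.2 h₀₁)) (add_nonneg h₀ hu₁.le)]
  have hscaled : c * (u₁ - u₀) * u₁ ^ 2 ≤ 3 * ((u₁ - sin u₁) - (u₀ - sin u₀)) * u₁ ^ 2 := by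
    simp only at h
    nlinarith [mul_le_mul_of_nonneg_left hcube hc]
  exact le_of_mul_le_mul_right hscaled (by positivity)

lemma sin_le_sin_of_le_of_le_pi_sub {x y : ℝ} (hx : 0 ≤ x) (hxy : x ≤ y) (hy : y ≤ π - x) :
    sin x ≤ sin y := by
  rcases le_total y (π / 2) with hy₂ | hy₂
  · exact sin_le_sin_of_le_of_le_pi_div_two (by linarith) hy₂ hxy
  · rw [← sin_pi_sub y]
    exact sin_le_sin_of_le_of_le_pi_div_two (by linarith) (by linarith) (by linarith)

lemma div_pi_le_sin_half {x : ℝ} (hx₀ : 0 ≤ x) (hx : x ≤ π) : x / π ≤ sin (x / 2) := by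
  have h := mul_le_sin (by linarith : 0 ≤ x / 2) (by linarith)
  rwa [show 2 / π * (x / 2) = x / π by ring] at h

lemma cos_sub_cos_le_of_sub_le {u₀ u₁ u₂ : ℝ} (h₀ : 0 ≤ u₀) (h₀₁ : u₀ ≤ u₁) (h₁₂ : u₁ ≤ u₂)
    (h₂ : u₂ ≤ π) (hl : u₂ - u₁ ≤ u₁ - u₀) :
    cos u₁ - cos u₂ ≤ 3 * π / 2 * (cos u₀ - cos u₁) := by
  rw [cos_sub_cos_eq_two_mul_sin_mul_sin, cos_sub_cos_eq_two_mul_sin_mul_sin]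
  have hl₀ : 0 ≤ sin ((u₂ - u₁) / 2) := sin_nonneg_of_nonneg_of_le_pi (by linarith) (by linarith)
  have hl_le : sin ((u₂ - u₁) / 2) ≤ sin ((u₁ - u₀) / 2) :=
    sin_le_sin_of_le_of_le_pi_div_two (by linarith) (by linarith) (by linarith)
  have hL_le : sin ((u₁ - u₀) / 2) ≤ sin ((u₀ + u₁) / 2) :=
    sin_le_sin_of_le_of_le_pi_sub (by linarith) (by linarith) (by linarith)
  have hL : u₁ - u₀ ≤ π * sin ((u₀ + u₁) / 2) := by
    have h := (div_pi_le_sin_half (by linarith) (by linarith)).trans hL_le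
    rwa [div_le_iff₀' pi_pos] at h
  have hlip : sin ((u₁ + u₂) / 2) ≤ sin ((u₀ + u₁) / 2) + (u₁ - u₀) := by
    have h := (abs_le.1 (abs_sin_sub_sin_le ((u₁ + u₂) / 2) ((u₀ + u₁) / 2))).2
    rw [abs_of_nonneg (by linarith)] at h
    linarith
  have hmid : sin ((u₁ + u₂) / 2) ≤ 3 * π / 2 * sin ((u₀ + u₁) / 2) := by
    nlinarith [pi_gt_three, (div_pi_le_sin_half (by linarith) (by linarith)).trans hL_le]
  calc 2 * sin ((u₁ + u₂) / 2) * sin ((u₂ - u₁) / 2)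
      ≤ 2 * (3 * π / 2 * sin ((u₀ + u₁) / 2)) * sin ((u₁ - u₀) / 2) := by
        have := sin_nonneg_of_nonneg_of_le_pi (by linarith : 0 ≤ (u₀ + u₁) / 2) (by linarith)
        gcongr
    _ = 3 * π / 2 * (2 * sin ((u₀ + u₁) / 2) * sin ((u₁ - u₀) / 2)) := by ring

lemma sin_le_four_pi_mul_sin {x y : ℝ} (hx : 0 ≤ x) (hxy : x ≤ y) (hy : y ≤ π)
    (h : π - x ≤ 8 * (π - y)) : sin x ≤ 4 * π * sin y := by
  have hy₀ : 0 ≤ sin y := sin_nonneg_of_nonneg_of_le_pi (by linarith) hy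
  rcases le_total y (π / 2) with hy₂ | hy₂
  · calc sin x ≤ sin y := sin_le_sin_of_le_of_le_pi_div_two (by linarith) hy₂ hxy
      _ ≤ 4 * π * sin y := le_mul_of_one_le_left hy₀ (by linarith [pi_gt_three])
  · have hjordan := mul_le_sin (by linarith : 0 ≤ π - y) (by linarith)
    rw [sin_pi_sub] at hjordan
    calc sin x = sin (π - x) := (sin_pi_sub x).symm
      _ ≤ π - x := sin_le (by linarith)
      _ ≤ 8 * (π - y) := h
      _ = 4 * π * (2 / π * (π - y)) := by field_simp; ring
      _ ≤ 4 * π * sin y := by gcongr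

lemma cos_sub_cos_le_twelve_pi_sq_mul {u₀ u₁ u₂ : ℝ} (h₀ : 0 ≤ u₀) (h₀₁ : u₀ ≤ u₁)
    (h₁₂ : u₁ ≤ u₂) (h₂ : u₂ ≤ π) (hL : u₁ - u₀ ≤ 6 * (u₂ - u₁)) :
    cos u₀ - cos u₁ ≤ 12 * π ^ 2 * (cos u₁ - cos u₂) := by
  rw [cos_sub_cos_eq_two_mul_sin_mul_sin, cos_sub_cos_eq_two_mul_sin_mul_sin]
  have hhalf : sin ((u₁ - u₀) / 2) ≤ 3 * π * sin ((u₂ - u₁) / 2) := by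
    have h := div_pi_le_sin_half (by linarith : 0 ≤ u₂ - u₁) (by linarith)
    rw [div_le_iff₀' pi_pos] at h
    nlinarith [sin_le (by linarith : 0 ≤ (u₁ - u₀) / 2), pi_pos]
  have hmid : sin ((u₀ + u₁) / 2) ≤ 4 * π * sin ((u₁ + u₂) / 2) :=
    sin_le_four_pi_mul_sin (by linarith) (by linarith) (by linarith) (by linarith)
  have hL₀ : 0 ≤ sin ((u₁ - u₀) / 2) := sin_nonneg_of_nonneg_of_le_pi (by linarith) (by linarith)
  calc 2 * sin ((u₀ + u₁) / 2) * sin ((u₁ - u₀) / 2)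
      ≤ 2 * (4 * π * sin ((u₁ + u₂) / 2)) * (3 * π * sin ((u₂ - u₁) / 2)) := by
        have := sin_nonneg_of_nonneg_of_le_pi (by linarith : 0 ≤ (u₁ + u₂) / 2) (by linarith)
        gcongr
    _ = 12 * π ^ 2 * (2 * sin ((u₁ + u₂) / 2) * sin ((u₂ - u₁) / 2)) := by ring

lemma sub_le_three_pi_div_two_mul_sub_of_arcsin_sub_le {a b c : ℝ} (ha : -1 ≤ a) (hab : a ≤ b)
    (hbc : b ≤ c) (hc : c ≤ 1) (h : arcsin c - arcsin b ≤ arcsin b - arcsin a) :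
    c - b ≤ 3 * π / 2 * (b - a) := by
  have key := cos_sub_cos_le_of_sub_le (u₀ := arcsin a + π / 2) (u₁ := arcsin b + π / 2)
    (u₂ := arcsin c + π / 2) (by linarith [neg_pi_div_two_le_arcsin a])
    (by linarith [arcsin_le_arcsin hab]) (by linarith [arcsin_le_arcsin hbc])
    (by linarith [arcsin_le_pi_div_two c]) (by linarith)
  rw [cos_add_pi_div_two, cos_add_pi_div_two, cos_add_pi_div_two, sin_arcsin ha (by linarith),
    sin_arcsin (by linarith) (by linarith), sin_arcsin (by linarith) hc] at key
  linarith

lemma sub_le_twelve_pi_sq_mul_sub_of_arcsin_sub_sqrt_le {a b c : ℝ} (ha : -1 ≤ a) (hab : a < b)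
    (hbc : b ≤ c) (hc : c ≤ 1)
    (h : (arcsin b - √(1 - b ^ 2)) - (arcsin a - √(1 - a ^ 2)) ≤
      2 * (1 + b) * (arcsin c - arcsin b)) :
    b - a ≤ 12 * π ^ 2 * (c - b) := by
  have h₀ : 0 ≤ arcsin a + π / 2 := by linarith [neg_pi_div_two_le_arcsin a]
  have h₀₁ : arcsin a + π / 2 ≤ arcsin b + π / 2 := by linarith [arcsin_le_arcsin hab.le]
  have h₁₂ : arcsin b + π / 2 ≤ arcsin c + π / 2 := by linarith [arcsin_le_arcsin hbc]
  have h₂ : arcsin c + π / 2 ≤ π := by linarith [arcsin_le_pi_div_two c]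
  have hstep := one_sub_cos_mul_sub_le h₀ h₀₁ (h₁₂.trans h₂)
  rw [cos_add_pi_div_two, sin_add_pi_div_two, sin_add_pi_div_two, cos_arcsin, cos_arcsin,
    sin_arcsin (by linarith) (by linarith)] at hstep
  have hL : arcsin b + π / 2 - (arcsin a + π / 2) ≤ 6 * (arcsin c + π / 2 - (arcsin b + π / 2)) :=
    le_of_mul_le_mul_left (by nlinarith) (by linarith : 0 < 1 + b)
  have key := cos_sub_cos_le_twelve_pi_sq_mul h₀ h₀₁ h₁₂ h₂ hL
  rw [cos_add_pi_div_two, cos_add_pi_div_two, cos_add_pi_div_two, sin_arcsin ha (by linarith),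
    sin_arcsin (by linarith) (by linarith), sin_arcsin (by linarith) hc] at key
  linarith

lemma intervalIntegrable_one_div_sqrt_one_sub_sq {a b : ℝ} (ha : -1 ≤ a) (hab : a ≤ b)
    (hb : b ≤ 1) : IntervalIntegrable (fun s => 1 / √(1 - s ^ 2)) volume a b :=
  (intervalIntegrable_iff_integrableOn_Ioc_of_le hab).2 <|
    intervalIntegral.integrableOn_deriv_of_nonneg continuous_arcsin.continuousOn
      (fun _ hs => hasDerivAt_arcsin (ne_of_gt (by linarith [hs.1]))
        (ne_of_lt (by linarith [hs.2])))
      (fun _ _ => by positivity)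

lemma integral_one_div_sqrt_one_sub_sq {a b : ℝ} (ha : -1 ≤ a) (hab : a ≤ b) (hb : b ≤ 1) :
    ∫ s in a..b, 1 / √(1 - s ^ 2) = arcsin b - arcsin a :=
  intervalIntegral.integral_eq_sub_of_hasDerivAt_of_le hab continuous_arcsin.continuousOn
    (fun _ hs => hasDerivAt_arcsin (ne_of_gt (by linarith [hs.1])) (ne_of_lt (by linarith [hs.2])))
    (intervalIntegrable_one_div_sqrt_one_sub_sq ha hab hb)

lemma hasDerivAt_arcsin_sub_sqrt_one_sub_sq {x : ℝ} (hx₀ : -1 < x) (hx₁ : x < 1) :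
    HasDerivAt (fun s => arcsin s - √(1 - s ^ 2)) ((1 + x) / √(1 - x ^ 2)) x := by
  have hpos : 0 < 1 - x ^ 2 := by nlinarith
  have hsqrt := ((hasDerivAt_pow 2 x).const_sub 1).sqrt hpos.ne'
  refine ((hasDerivAt_arcsin hx₀.ne' hx₁.ne).sub hsqrt).congr_deriv ?_
  field_simp
  ring

lemma intervalIntegrable_one_add_div_sqrt_one_sub_sq {a b : ℝ} (ha : -1 ≤ a) (hab : a ≤ b)
    (hb : b ≤ 1) : IntervalIntegrable (fun s => (1 + s) / √(1 - s ^ 2)) volume a b :=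
  (intervalIntegrable_iff_integrableOn_Ioc_of_le hab).2 <|
    intervalIntegral.integrableOn_deriv_of_nonneg (by fun_prop)
      (fun _ hs => hasDerivAt_arcsin_sub_sqrt_one_sub_sq (by linarith [hs.1]) (by linarith [hs.2]))
      (fun _ hs => div_nonneg (by linarith [hs.1]) (sqrt_nonneg _))

lemma integral_one_add_div_sqrt_one_sub_sq {a b : ℝ} (ha : -1 ≤ a) (hab : a ≤ b) (hb : b ≤ 1) :
    ∫ s in a..b, (1 + s) / √(1 - s ^ 2) =
      (arcsin b - √(1 - b ^ 2)) - (arcsin a - √(1 - a ^ 2)) :=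
  intervalIntegral.integral_eq_sub_of_hasDerivAt_of_le hab (by fun_prop)
    (fun _ hs => hasDerivAt_arcsin_sub_sqrt_one_sub_sq (by linarith [hs.1]) (by linarith [hs.2]))
    (intervalIntegrable_one_add_div_sqrt_one_sub_sq ha hab hb)

lemma integral_div_sqrt_le_mul_arcsin_sub {g : ℝ → ℝ} {a b C : ℝ} (ha : -1 ≤ a) (hab : a ≤ b)
    (hb : b ≤ 1) (hint : IntervalIntegrable (fun s => g s / √(1 - s ^ 2)) volume a b)
    (hC : ∀ s ∈ Icc a b, g s ≤ C) :
    ∫ s in a..b, g s / √(1 - s ^ 2) ≤ C * (arcsin b - arcsin a) := by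
  rw [← integral_one_div_sqrt_one_sub_sq ha hab hb, ← intervalIntegral.integral_const_mul]
  refine intervalIntegral.integral_mono_on hab hint
    ((intervalIntegrable_one_div_sqrt_one_sub_sq ha hab hb).const_mul C) fun s hs => ?_
  rw [mul_one_div]
  exact div_le_div_of_nonneg_right (hC s hs) (sqrt_nonneg _)

lemma mul_arcsin_sub_le_integral_div_sqrt {g : ℝ → ℝ} {a b C : ℝ} (ha : -1 ≤ a) (hab : a ≤ b)
    (hb : b ≤ 1) (hint : IntervalIntegrable (fun s => g s / √(1 - s ^ 2)) volume a b)
    (hC : ∀ s ∈ Icc a b, C ≤ g s) :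
    C * (arcsin b - arcsin a) ≤ ∫ s in a..b, g s / √(1 - s ^ 2) := by
  rw [← integral_one_div_sqrt_one_sub_sq ha hab hb, ← intervalIntegral.integral_const_mul]
  refine intervalIntegral.integral_mono_on hab
    ((intervalIntegrable_one_div_sqrt_one_sub_sq ha hab hb).const_mul C) hint fun s hs => ?_
  rw [mul_one_div]
  exact div_le_div_of_nonneg_right (hC s hs) (sqrt_nonneg _)

lemma ConcaveOn.sub_mul_add_sub_mul_le {D : Set ℝ} {g : ℝ → ℝ} (hg : ConcaveOn ℝ D g) {x y z : ℝ}
    (hx : x ∈ D) (hz : z ∈ D) (hxy : x ≤ y) (hyz : y ≤ z) :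
    (z - y) * g x + (y - x) * g z ≤ (z - x) * g y := by
  rcases hxy.eq_or_lt with rfl | hxy
  · simp
  rcases hyz.eq_or_lt with rfl | hyz
  · simp
  have h := hg.slope_anti_adjacent hx hz hxy hyz
  rw [div_le_div_iff₀ (sub_pos.2 hyz) (sub_pos.2 hxy)] at h
  linarith

lemma ConcaveOn.sub_mul_le_sub_mul {D : Set ℝ} {g : ℝ → ℝ} (hg : ConcaveOn ℝ D g) {p s b : ℝ}
    (hp : p ∈ D) (hb : b ∈ D) (hps : p ≤ s) (hsb : s ≤ b) (hp₀ : 0 ≤ g p) :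
    (s - p) * g b ≤ (b - p) * g s := by
  nlinarith [hg.sub_mul_add_sub_mul_le hp hb hps hsb, mul_nonneg (sub_nonneg.2 hsb) hp₀]

lemma ConcaveOn.le_two_mul {D : Set ℝ} {g : ℝ → ℝ} (hg : ConcaveOn ℝ D g) {a b s : ℝ}
    (ha : a ∈ D) (hs : s ∈ D) (hab : a < b) (hbs : b ≤ s) (hsa : s - a ≤ 2 * (b - a))
    (ha₀ : 0 ≤ g a) (hb₀ : 0 ≤ g b) : g s ≤ 2 * g b := by
  have h := hg.sub_mul_add_sub_mul_le ha hs hab.le hbs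
  have h' : (b - a) * g s ≤ (b - a) * (2 * g b) := by
    nlinarith [mul_nonneg (sub_nonneg.2 hbs) ha₀, mul_le_mul_of_nonneg_right hsa hb₀]
  exact le_of_mul_le_mul_left h' (sub_pos.2 hab)

lemma arcsin_sub_le_of_integral_eq {g : ℝ → ℝ} {a b c m : ℝ} (ha : -1 ≤ a) (hab : a ≤ b)
    (hbc : b ≤ c) (hc : c ≤ 1) (hmono : MonotoneOn g (Icc a c))
    (hint₁ : IntervalIntegrable (fun s => g s / √(1 - s ^ 2)) volume a b)
    (hint₂ : IntervalIntegrable (fun s => g s / √(1 - s ^ 2)) volume b c)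
    (h₁ : ∫ s in a..b, g s / √(1 - s ^ 2) = m) (h₂ : ∫ s in b..c, g s / √(1 - s ^ 2) = m)
    (hm : 0 < m) :
    arcsin c - arcsin b ≤ arcsin b - arcsin a := by
  have hb : b ∈ Icc a c := ⟨hab, hbc⟩
  have hleft : m ≤ g b * (arcsin b - arcsin a) :=
    h₁ ▸ integral_div_sqrt_le_mul_arcsin_sub ha hab (hbc.trans hc) hint₁
      fun s hs => hmono ⟨hs.1, hs.2.trans hbc⟩ hb hs.2
  have hright : g b * (arcsin c - arcsin b) ≤ m :=
    h₂ ▸ mul_arcsin_sub_le_integral_div_sqrt (ha.trans hab) hbc hc hint₂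
      fun s hs => hmono hb ⟨hab.trans hs.1, hs.2⟩ hs.1
  have hgb : 0 < g b := by
    by_contra! h
    nlinarith [arcsin_le_arcsin hab]
  exact le_of_mul_le_mul_left (hright.trans hleft) hgb

lemma arcsin_sub_sqrt_sub_le_of_integral_eq {g : ℝ → ℝ} {a b c m : ℝ}
    (hg₀ : ∀ x ∈ Icc (-1 : ℝ) 1, 0 ≤ g x) (hconc : ConcaveOn ℝ (Icc (-1) 1) g)
    (ha : -1 ≤ a) (hab : a < b) (hbc : b ≤ c) (hc : c ≤ 1) (hca : c - a ≤ 2 * (b - a))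
    (hint₁ : IntervalIntegrable (fun s => g s / √(1 - s ^ 2)) volume a b)
    (hint₂ : IntervalIntegrable (fun s => g s / √(1 - s ^ 2)) volume b c)
    (h₁ : ∫ s in a..b, g s / √(1 - s ^ 2) = m) (h₂ : ∫ s in b..c, g s / √(1 - s ^ 2) = m)
    (hm : 0 < m) :
    (arcsin b - √(1 - b ^ 2)) - (arcsin a - √(1 - a ^ 2)) ≤
      2 * (1 + b) * (arcsin c - arcsin b) := by
  have hmem : ∀ x, a ≤ x → x ≤ c → x ∈ Icc (-1 : ℝ) 1 :=
    fun x hx hx' => ⟨ha.trans hx, hx'.trans hc⟩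
  have hneg : (-1 : ℝ) ∈ Icc (-1 : ℝ) 1 := ⟨le_rfl, by norm_num⟩
  have hb := hmem b hab.le hbc
  have hright : m ≤ 2 * g b * (arcsin c - arcsin b) :=
    h₂ ▸ integral_div_sqrt_le_mul_arcsin_sub hb.1 hbc hc hint₂ fun s hs =>
      hconc.le_two_mul (hmem a le_rfl (hab.le.trans hbc)) (hmem s (hab.le.trans hs.1) hs.2) hab
        hs.1 (by linarith [hs.2]) (hg₀ a (hmem a le_rfl (hab.le.trans hbc))) (hg₀ b hb)
  have hleft : g b * ((arcsin b - √(1 - b ^ 2)) - (arcsin a - √(1 - a ^ 2))) ≤ (1 + b) * m := by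
    rw [← integral_one_add_div_sqrt_one_sub_sq ha hab.le hb.2, ← h₁,
      ← intervalIntegral.integral_const_mul, ← intervalIntegral.integral_const_mul]
    refine intervalIntegral.integral_mono_on hab.le
      ((intervalIntegrable_one_add_div_sqrt_one_sub_sq ha hab.le hb.2).const_mul _)
      (hint₁.const_mul _) fun s hs => ?_
    have h := hconc.sub_mul_le_sub_mul hneg hb (ha.trans hs.1) hs.2 (hg₀ (-1) hneg)
    rw [mul_div_assoc', mul_div_assoc']
    exact div_le_div_of_nonneg_right (by linarith) (sqrt_nonneg _)
  have hgb : 0 < g b := by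
    by_contra! h
    nlinarith [arcsin_le_arcsin hbc]
  refine le_of_mul_le_mul_left ?_ hgb
  calc g b * ((arcsin b - √(1 - b ^ 2)) - (arcsin a - √(1 - a ^ 2)))
      ≤ (1 + b) * m := hleft
    _ ≤ (1 + b) * (2 * g b * (arcsin c - arcsin b)) :=
        mul_le_mul_of_nonneg_left hright (by linarith [hb.1])
    _ = g b * (2 * (1 + b) * (arcsin c - arcsin b)) := by ring

lemma sub_le_twelve_pi_sq_mul_sub_of_integral_eq {g : ℝ → ℝ} {a b c m : ℝ}
    (hg₀ : ∀ x ∈ Icc (-1 : ℝ) 1, 0 ≤ g x) (hconc : ConcaveOn ℝ (Icc (-1) 1) g)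
    (ha : -1 ≤ a) (hab : a < b) (hbc : b ≤ c) (hc : c ≤ 1)
    (hint₁ : IntervalIntegrable (fun s => g s / √(1 - s ^ 2)) volume a b)
    (hint₂ : IntervalIntegrable (fun s => g s / √(1 - s ^ 2)) volume b c)
    (h₁ : ∫ s in a..b, g s / √(1 - s ^ 2) = m) (h₂ : ∫ s in b..c, g s / √(1 - s ^ 2) = m)
    (hm : 0 < m) :
    b - a ≤ 12 * π ^ 2 * (c - b) := by
  rcases le_total (b - a) (c - b) with hle | hgt
  · exact hle.trans (le_mul_of_one_le_left (sub_nonneg.2 hbc) (by nlinarith [pi_gt_three]))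
  · exact sub_le_twelve_pi_sq_mul_sub_of_arcsin_sub_sqrt_le ha hab hbc hc
      (arcsin_sub_sqrt_sub_le_of_integral_eq hg₀ hconc ha hab hbc hc (by linarith) hint₁ hint₂
        h₁ h₂ hm)

lemma intervalIntegrable_and_integral_eq_inv_of_mul_integral_eq {f : ℝ → ℝ} {x y z r n : ℝ}
    (hn : n + 1 ≠ 0) (hxy : x ≤ y) (hyz : y ≤ z) (hy : r * ∫ s in x..y, f s = n)
    (hz : r * ∫ s in x..z, f s = n + 1) :
    IntervalIntegrable f volume y z ∧ ∫ s in y..z, f s = r⁻¹ := by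
  have hint : IntervalIntegrable f volume x z :=
    intervalIntegral.intervalIntegrable_of_integral_ne_zero fun h => by
      rw [h, mul_zero] at hz
      exact hn hz.symm
  have hmem : y ∈ uIcc x z := by
    rw [uIcc_of_le (hxy.trans hyz)]
    exact ⟨hxy, hyz⟩
  refine ⟨hint.mono_set (uIcc_subset_uIcc_right hmem), ?_⟩
  rw [← intervalIntegral.integral_interval_sub_left hint
    (hint.mono_set (uIcc_subset_uIcc_left hmem))]
  exact eq_inv_of_mul_eq_one_right (by linear_combination hz - hy)

lemma twelve_pi_sq_le : 12 * π ^ 2 ≤ 24 * π * √2 * √(3 * π / 4 + 1) := by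
  have hsqrt : √2 * √(3 * π / 4 + 1) = √(3 * π / 2 + 2) := by
    rw [← sqrt_mul zero_le_two]
    ring_nf
  have hhalf : π / 2 ≤ √(3 * π / 2 + 2) :=
    (le_sqrt (by positivity) (by positivity)).2 (by nlinarith [pi_lt_four, pi_pos])
  calc 12 * π ^ 2 = 24 * π * (π / 2) := by ring
    _ ≤ 24 * π * √(3 * π / 2 + 2) := by gcongr
    _ = 24 * π * √2 * √(3 * π / 4 + 1) := by rw [mul_assoc _ √2, hsqrt]

theorem stmt_17_general (k : ℕ) (g : ℝ → ℝ)
    (hg0 : ∀ x ∈ Set.Icc (-1:ℝ) 1, 0 ≤ g x)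
    (hgmono : MonotoneOn g (Set.Icc (-1:ℝ) 1))
    (hgconc : ConcaveOn ℝ (Set.Icc (-1:ℝ) 1) g)
    (t : ℕ → ℝ)
    (htmem : ∀ j ≤ k, t j ∈ Set.Icc (-1:ℝ) 1)
    (htmono : ∀ i j : ℕ, i < j → j ≤ k → t i < t j)
    (htW : ∀ j ≤ k,
      ((k : ℝ) / π) * ∫ s in (-1:ℝ)..(t j), g s / Real.sqrt (1 - s ^ 2) = (j : ℝ))
    :
    ∀ j : ℕ, j + 2 ≤ k →
      2 / (3 * π) ≤ (t (j + 1) - t j) / (t (j + 2) - t (j + 1)) ∧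
      (t (j + 1) - t j) / (t (j + 2) - t (j + 1)) ≤
        24 * π * Real.sqrt 2 * Real.sqrt (3 * π / 4 + 1) := by
  intro j hj
  have ha := (htmem j (by omega)).1
  have hc := (htmem (j + 2) hj).2
  have hab : t j < t (j + 1) := htmono _ _ (by omega) (by omega)
  have hbc : t (j + 1) < t (j + 2) := htmono _ _ (by omega) hj
  have hk : (0 : ℝ) < k := by exact_mod_cast (by omega : 0 < k)
  obtain ⟨hint₁, hmass₁⟩ := intervalIntegrable_and_integral_eq_inv_of_mul_integral_eq
    (by positivity) ha hab.le (htW j (by omega)) (by exact_mod_cast htW (j + 1) (by omega))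
  obtain ⟨hint₂, hmass₂⟩ := intervalIntegrable_and_integral_eq_inv_of_mul_integral_eq
    (by positivity) (ha.trans hab.le) hbc.le (htW (j + 1) (by omega))
    (by exact_mod_cast htW (j + 2) hj)
  have hmass : 0 < ((k : ℝ) / π)⁻¹ := by positivity
  constructor
  · have hlower := sub_le_three_pi_div_two_mul_sub_of_arcsin_sub_le ha hab.le hbc.le hc
      (arcsin_sub_le_of_integral_eq ha hab.le hbc.le hc (hgmono.mono (Icc_subset_Icc ha hc))
        hint₁ hint₂ hmass₁ hmass₂ hmass)
    rw [div_le_div_iff₀ (by positivity) (sub_pos.2 hbc)]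
    linarith
  · have hupper := sub_le_twelve_pi_sq_mul_sub_of_integral_eq hg0 hgconc ha hab hbc.le hc
      hint₁ hint₂ hmass₁ hmass₂ hmass
    rw [div_le_iff₀ (sub_pos.2 hbc)]
    exact hupper.trans (mul_le_mul_of_nonneg_right twelve_pi_sq_le (sub_pos.2 hbc).le)

theorem stmt_17 (k : ℕ) (hk : 2 ≤ k) (g : ℝ → ℝ)
    (hg0 : ∀ x ∈ Set.Icc (-1:ℝ) 1, 0 ≤ g x)
    (hgmono : MonotoneOn g (Set.Icc (-1:ℝ) 1))
    (hgconc : ConcaveOn ℝ (Set.Icc (-1:ℝ) 1) g)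
    (hgconv : ConvexOn ℝ (Set.Ioo (-1:ℝ) 1) (fun s => g s / (1 + s)))
    (hnorm : (1 / π) * ∫ s in (-1:ℝ)..1, g s / Real.sqrt (1 - s ^ 2) = 1)
    (t : ℕ → ℝ)
    (ht0 : t 0 = -1) (htk : t k = 1)
    (htmem : ∀ j ≤ k, t j ∈ Set.Icc (-1:ℝ) 1)
    (htmono : ∀ i j : ℕ, i < j → j ≤ k → t i < t j)
    (htW : ∀ j ≤ k,
      ((k : ℝ) / π) * ∫ s in (-1:ℝ)..(t j), g s / Real.sqrt (1 - s ^ 2) = (j : ℝ))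
    :
    ∀ j : ℕ, j + 2 ≤ k →
      2 / (3 * π) ≤ (t (j + 1) - t j) / (t (j + 2) - t (j + 1)) ∧
      (t (j + 1) - t j) / (t (j + 2) - t (j + 1)) ≤
        24 * π * Real.sqrt 2 * Real.sqrt (3 * π / 4 + 1) :=
  stmt_17_general k g hg0 hgmono hgconc t htmem htmono htW
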